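/- In the exponential mechanism, the probability assigned to outcome r, namely exp(ε·q(r)/(2Δq)) / ∑_{r'} exp(ε·q(r')/(2Δq)), changes by a factor of at most e^ε when the quality function q is replaced by q' with |q(r) − q'(r)| ≤ Δq for all r. Hence the exponential mechanism is ε-differentially private. -/
import Mathlib


/-- The exponential mechanism is `ε`-differentially private: if the quality functions `q, q'`
differ by at most `Δq` pointwise, the probability assigned to any outcome changes by a factor
of at most `exp ε`. -/
theorem exponential_mechanism_dp {R : Type*} [Fintype R] [Nonempty R]
    (ε Δq : ℝ) (hε : 0 < ε) (hΔ : 0 < Δq) (q q' : R → ℝ)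
    (h : ∀ r, |q r - q' r| ≤ Δq) (r : R) :
    Real.exp (ε * q r / (2 * Δq)) / (∑ r', Real.exp (ε * q r' / (2 * Δq))) ≤
      Real.exp ε *
        (Real.exp (ε * q' r / (2 * Δq)) / (∑ r', Real.exp (ε * q' r' / (2 * Δq)))) := by
  have hnum : ∀ s : R, Real.exp (ε * q s / (2 * Δq)) ≤
      Real.exp (ε / 2) * Real.exp (ε * q' s / (2 * Δq)) := by
    intro s
    rw [← Real.exp_add]
    apply Real.exp_le_exp.2
    have h1 := (abs_le.1 (h s)).2
    have hmul := mul_le_mul_of_nonneg_left h1 hε.le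
    have h2 : (ε * q s - ε * q' s) / (2 * Δq) ≤ ε / 2 := by
      rw [div_le_iff₀ (by positivity)]; nlinarith
    have h3 : ε * q s / (2 * Δq) - ε * q' s / (2 * Δq) = (ε * q s - ε * q' s) / (2 * Δq) := by
      ring
    linarith
  have hden : (∑ r', Real.exp (ε * q' r' / (2 * Δq))) ≤
      Real.exp (ε / 2) * ∑ r', Real.exp (ε * q r' / (2 * Δq)) := by
    rw [Finset.mul_sum]
    apply Finset.sum_le_sum
    intro s _
    rw [← Real.exp_add]
    apply Real.exp_le_exp.2
    have h1 := (abs_le.1 (h s)).1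
    have hmul := mul_le_mul_of_nonneg_left h1 hε.le
    have h2 : (ε * q' s - ε * q s) / (2 * Δq) ≤ ε / 2 := by
      rw [div_le_iff₀ (by positivity)]; nlinarith
    have h3 : ε * q' s / (2 * Δq) - ε * q s / (2 * Δq) = (ε * q' s - ε * q s) / (2 * Δq) := by
      ring
    linarith
  have hDpos : 0 < ∑ r', Real.exp (ε * q r' / (2 * Δq)) :=
    Finset.sum_pos (fun s _ => Real.exp_pos _) Finset.univ_nonempty
  have hD'pos : 0 < ∑ r', Real.exp (ε * q' r' / (2 * Δq)) :=
    Finset.sum_pos (fun s _ => Real.exp_pos _) Finset.univ_nonempty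
  have hsplit : Real.exp ε = Real.exp (ε / 2) * Real.exp (ε / 2) := by
    rw [← Real.exp_add]; norm_num
  rw [div_le_iff₀ hDpos]
  have key : Real.exp (ε * q r / (2 * Δq)) * (∑ r', Real.exp (ε * q' r' / (2 * Δq))) ≤
      Real.exp ε * Real.exp (ε * q' r / (2 * Δq)) * (∑ r', Real.exp (ε * q r' / (2 * Δq))) := by
    calc Real.exp (ε * q r / (2 * Δq)) * (∑ r', Real.exp (ε * q' r' / (2 * Δq)))
        ≤ (Real.exp (ε / 2) * Real.exp (ε * q' r / (2 * Δq))) *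
          (Real.exp (ε / 2) * ∑ r', Real.exp (ε * q r' / (2 * Δq))) := by
          apply mul_le_mul (hnum r) hden hD'pos.le
          positivity
      _ = Real.exp ε * Real.exp (ε * q' r / (2 * Δq)) *
          (∑ r', Real.exp (ε * q r' / (2 * Δq))) := by rw [hsplit]; ring
  calc Real.exp (ε * q r / (2 * Δq))
      = Real.exp (ε * q r / (2 * Δq)) * (∑ r', Real.exp (ε * q' r' / (2 * Δq))) /
        (∑ r', Real.exp (ε * q' r' / (2 * Δq))) := by field_simp
    _ ≤ Real.exp ε * Real.exp (ε * q' r / (2 * Δq)) * (∑ r', Real.exp (ε * q r' / (2 * Δq))) /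
        (∑ r', Real.exp (ε * q' r' / (2 * Δq))) := by gcongr
    _ = Real.exp ε * (Real.exp (ε * q' r / (2 * Δq)) / (∑ r', Real.exp (ε * q' r' / (2 * Δq)))) *
        (∑ r', Real.exp (ε * q r' / (2 * Δq))) := by ring
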